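/- Let (X_i)_{i≥1} be independent, identically distributed real random variables taking values in {−2, −1, 0, 1, 2}, with P(X_i = −2) = p1, P(X_i = −1) = p2, P(X_i = 0) = p3, P(X_i = 1) = p4, P(X_i = 2) = p5, and suppose the mean 2p5 + p4 − p2 − 2p1 is nonzero. Then almost surely the series Σ_{i=1}^{∞} X_i/i does not converge, i.e., almost surely the partial sums Σ_{i=1}^{k} X_i/i do not tend to a finite limit. -/

import Mathlib

/-!
By the strong law of large numbers, the averages `(X 1 + ⋯ + X n) / n` tend almost surely to the
mean `2p5 + p4 − p2 − 2p1 ≠ 0`. Kronecker's lemma says that whenever `∑ X i / i` converges, these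
averages tend to `0`, so the series converges only on a null set.
-/

open MeasureTheory Filter ProbabilityTheory Finset

theorem Finset.sum_Icc_one_eq_sum_range {M : Type*} [AddCommMonoid M] (f : ℕ → M) (n : ℕ) :
    ∑ i ∈ Icc 1 n, f i = ∑ i ∈ range n, f (i + 1) := by
  rw [range_eq_Ico, sum_Ico_add', zero_add, Ico_add_one_right_eq_Icc]

theorem Filter.Tendsto.kronecker {a : ℕ → ℝ} {L : ℝ}
    (h : Tendsto (fun k => ∑ i ∈ range k, a i / (i + 1)) atTop (nhds L)) :
    Tendsto (fun n => (∑ i ∈ range n, a i) / n) atTop (nhds 0) := by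
  set b : ℕ → ℝ := fun k => ∑ i ∈ range k, a i / (i + 1)
  have summation_by_parts : ∀ n : ℕ, ∑ i ∈ range n, a i = n * b n - ∑ k ∈ range n, b k := by
    intro n
    induction n with
    | zero => simp
    | succ n ih =>
      simp only [b, sum_range_succ] at ih ⊢
      rw [ih]
      push_cast
      field_simp
      ring
  have hcesaro : Tendsto (fun n : ℕ => b n - (n : ℝ)⁻¹ * ∑ k ∈ range n, b k) atTop
      (nhds (L - L)) := h.sub h.cesaro
  rw [sub_self] at hcesaro
  refine hcesaro.congr' ?_
  filter_upwards [eventually_ne_atTop 0] with n hn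
  rw [summation_by_parts]
  field_simp

theorem ProbabilityTheory.identDistrib_of_measure_preimage_singleton_eq
    {α β γ : Type*} [MeasurableSpace α] [MeasurableSpace β] [MeasurableSpace γ]
    [MeasurableSingletonClass γ] {μ : Measure α} {ν : Measure β} {f : α → γ} {g : β → γ}
    {S : Set γ} (hS : S.Countable) (hf : Measurable f) (hg : Measurable g)
    (hfS : ∀ a, f a ∈ S) (hgS : ∀ b, g b ∈ S)
    (h : ∀ c ∈ S, μ (f ⁻¹' {c}) = ν (g ⁻¹' {c})) :
    IdentDistrib f g μ ν := by
  have : Countable S := hS.to_subtype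
  -- on a countable codomain a law is determined by its point masses (`Measure.map_eq_sum`)
  have hf' : Measurable (S.codRestrict f hfS) := hf.subtype_mk
  have hg' : Measurable (S.codRestrict g hgS) := hg.subtype_mk
  have hcod : IdentDistrib (S.codRestrict f hfS) (S.codRestrict g hgS) μ ν := by
    refine ⟨hf'.aemeasurable, hg'.aemeasurable, ?_⟩
    rw [Measure.map_eq_sum _ _ hf', Measure.map_eq_sum _ _ hg']
    have hc : ∀ c : S, μ (S.codRestrict f hfS ⁻¹' {c}) = ν (S.codRestrict g hgS ⁻¹' {c}) :=
      fun c => by simpa [Set.preimage, Subtype.ext_iff] using h c c.2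
    simp_rw [hc]
  exact hcod.comp measurable_subtype_coe

theorem eq_sum_indicator_preimage_singleton_of_forall_mem {α M : Type*} [AddCommMonoid M]
    {f : α → M} {S : Finset M} (hS : ∀ a, f a ∈ S) :
    f = fun a => ∑ v ∈ S, (f ⁻¹' {v}).indicator (fun _ => v) a := by
  funext a
  rw [sum_eq_single_of_mem (f a) (hS a)]
  · simp
  · intro v _ hv
    simp [Ne.symm hv]

section FiniteRange

variable {α E : Type*} [MeasurableSpace α] [NormedAddCommGroup E] [MeasurableSpace E]
  [MeasurableSingletonClass E] {μ : Measure α} [IsFiniteMeasure μ] {f : α → E} {S : Finset E}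

theorem integrable_of_forall_mem_finset (hf : Measurable f) (hS : ∀ a, f a ∈ S) :
    Integrable f μ := by
  rw [eq_sum_indicator_preimage_singleton_of_forall_mem hS]
  exact integrable_finsetSum _ fun v _ =>
    (integrable_const v).indicator (hf (measurableSet_singleton v))

theorem integral_eq_sum_of_forall_mem_finset [NormedSpace ℝ E] [CompleteSpace E]
    (hf : Measurable f) (hS : ∀ a, f a ∈ S) :
    ∫ a, f a ∂μ = ∑ v ∈ S, μ.real (f ⁻¹' {v}) • v := by
  conv_lhs => rw [eq_sum_indicator_preimage_singleton_of_forall_mem hS]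
  rw [integral_finsetSum]
  · exact sum_congr rfl fun v _ => integral_indicator_const v (hf (measurableSet_singleton v))
  · exact fun v _ => (integrable_const v).indicator (hf (measurableSet_singleton v))

end FiniteRange

theorem stmt_12_general {Ω : Type*} [MeasurableSpace Ω] (μ : Measure Ω)
    [IsProbabilityMeasure μ] (X : ℕ → Ω → ℝ)
    (hmeas : ∀ i, Measurable (X i))
    (hindep : ProbabilityTheory.iIndepFun X μ)
    (p1 p2 p3 p4 p5 : ENNReal)
    (hval : ∀ i, 1 ≤ i → ∀ ω, X i ω ∈ ({-2, -1, 0, 1, 2} : Set ℝ))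
    (h1 : ∀ i, 1 ≤ i → μ {ω | X i ω = -2} = p1)
    (h2 : ∀ i, 1 ≤ i → μ {ω | X i ω = -1} = p2)
    (h3 : ∀ i, 1 ≤ i → μ {ω | X i ω = 0} = p3)
    (h4 : ∀ i, 1 ≤ i → μ {ω | X i ω = 1} = p4)
    (h5 : ∀ i, 1 ≤ i → μ {ω | X i ω = 2} = p5)
    (hmean : 2 * p5.toReal + p4.toReal - p2.toReal - 2 * p1.toReal ≠ 0) :
    ∀ᵐ ω ∂μ, ¬ ∃ L : ℝ,
      Tendsto (fun k => ∑ i ∈ Finset.Icc 1 k, X i ω / (i : ℝ)) atTop (nhds L) := by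
  set Y : ℕ → Ω → ℝ := fun i => X (i + 1)
  have hY0 : ∀ ω, Y 0 ω ∈ ({-2, -1, 0, 1, 2} : Finset ℝ) := fun ω => by
    simpa using hval 1 le_rfl ω
  have hident : ∀ i, IdentDistrib (Y i) (Y 0) μ μ := fun i =>
    identDistrib_of_measure_preimage_singleton_eq (Set.toFinite _).countable
      (hmeas _) (hmeas _) (hval _ (by omega)) (hval _ le_rfl) <| by
        rintro c (rfl | rfl | rfl | rfl | rfl)
        exacts [(h1 _ (by omega)).trans (h1 1 le_rfl).symm,
          (h2 _ (by omega)).trans (h2 1 le_rfl).symm, (h3 _ (by omega)).trans (h3 1 le_rfl).symm,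
          (h4 _ (by omega)).trans (h4 1 le_rfl).symm, (h5 _ (by omega)).trans (h5 1 le_rfl).symm]
  have hE : μ[Y 0] = 2 * p5.toReal + p4.toReal - p2.toReal - 2 * p1.toReal := by
    rw [integral_eq_sum_of_forall_mem_finset (hmeas 1) hY0]
    norm_num [sum_insert, measureReal_def, Set.preimage, h1 1 le_rfl, h2 1 le_rfl, h4 1 le_rfl,
      h5 1 le_rfl]
    ring
  have hindep' : Pairwise fun i j => IndepFun (Y i) (Y j) μ := fun i j hij =>
    hindep.indepFun (by simpa using hij)
  filter_upwards [strong_law_ae_real Y (integrable_of_forall_mem_finset (hmeas 1) hY0)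
    hindep' hident] with ω hslln ⟨L, hL⟩
  simp_rw [sum_Icc_one_eq_sum_range, Nat.cast_add_one] at hL
  exact hmean (hE ▸ tendsto_nhds_unique hslln hL.kronecker)

/-- Proposition 3, case (ii): for i.i.d. ratings on {−2, −1, 0, 1, 2} with a
nonzero mean `2p5 + p4 − p2 − 2p1`, the series `∑ X i / i` almost surely does
not converge. -/
theorem stmt_12 {Ω : Type*} [MeasurableSpace Ω] (μ : Measure Ω)
    [IsProbabilityMeasure μ] (X : ℕ → Ω → ℝ)
    (hmeas : ∀ i, Measurable (X i))
    (hindep : ProbabilityTheory.iIndepFun X μ)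
    (p1 p2 p3 p4 p5 : ENNReal)
    (hval : ∀ i, 1 ≤ i → ∀ ω, X i ω ∈ ({-2, -1, 0, 1, 2} : Set ℝ))
    (h1 : ∀ i, 1 ≤ i → μ {ω | X i ω = -2} = p1)
    (h2 : ∀ i, 1 ≤ i → μ {ω | X i ω = -1} = p2)
    (h3 : ∀ i, 1 ≤ i → μ {ω | X i ω = 0} = p3)
    (h4 : ∀ i, 1 ≤ i → μ {ω | X i ω = 1} = p4)
    (h5 : ∀ i, 1 ≤ i → μ {ω | X i ω = 2} = p5)
    (hsum : p1 + p2 + p3 + p4 + p5 = 1)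
    (hmean : 2 * p5.toReal + p4.toReal - p2.toReal - 2 * p1.toReal ≠ 0) :
    ∀ᵐ ω ∂μ, ¬ ∃ L : ℝ,
      Tendsto (fun k => ∑ i ∈ Finset.Icc 1 k, X i ω / (i : ℝ)) atTop (nhds L) :=
  stmt_12_general μ X hmeas hindep p1 p2 p3 p4 p5 hval h1 h2 h3 h4 h5 hmean
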